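/- For every matrix game Z ∈ ℝ^{l×m} (with l, m ≥ 1), the game is determined: sup_{x∈Δ_l} inf_{y∈Δ_m} xᵀZy = inf_{y∈Δ_m} sup_{x∈Δ_l} xᵀZy, and moreover all four extrema are attained, so max_{x∈Δ_l} min_{y∈Δ_m} xᵀZy = min_{y∈Δ_m} max_{x∈Δ_l} xᵀZy. -/

import Mathlib

/-!
The payoff `xᵀZy` is a bilinear form on the product of two simplices, which are nonempty, compact
and convex. On finite-dimensional spaces a bilinear form is continuous and, being linear in each
variable, convex and concave in each variable, so Sion's minimax theorem gives a saddle point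
`(x₀, y₀)`. Its payoff `v` is both the largest payoff player 1 can guarantee (attained by `x₀`) and
the smallest loss player 2 can guarantee (attained by `y₀`), hence the common value of max-min
and min-max.
-/

open Finset

/-- Expected utility of player 1 in the matrix game `Z` under mixed strategies `x` and `y`:
`xᵀ Z y = ∑_{i,j} x_i z_{ij} y_j`. -/
def matPayoff {l m : ℕ} (Z : Matrix (Fin l) (Fin m) ℝ)
    (x : Fin l → ℝ) (y : Fin m → ℝ) : ℝ :=
  ∑ i, ∑ j, x i * Z i j * y j

namespace IsSaddlePointOn

variable {E F β : Type*} {X : Set E} {Y : Set F} {f : E → F → β} {a : E} {b : F}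

section Preorder

variable [Preorder β]

theorem isGreatest_image (h : IsSaddlePointOn X Y f a b) (ha : a ∈ X) (hb : b ∈ Y) :
    IsGreatest (f a '' Y) (f a b) :=
  ⟨⟨b, hb, rfl⟩, by rintro _ ⟨y, hy, rfl⟩; exact h a ha y hy⟩

theorem isLeast_image (h : IsSaddlePointOn X Y f a b) (ha : a ∈ X) (hb : b ∈ Y) :
    IsLeast ((f · b) '' X) (f a b) :=
  ⟨⟨a, ha, rfl⟩, by rintro _ ⟨x, hx, rfl⟩; exact h x hx b hb⟩

theorem isLeast_setOf_isGreatest (h : IsSaddlePointOn X Y f a b) (ha : a ∈ X) (hb : b ∈ Y) :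
    IsLeast {w | ∃ x ∈ X, IsGreatest (f x '' Y) w} (f a b) :=
  ⟨⟨a, ha, h.isGreatest_image ha hb⟩, by
    rintro w ⟨x, hx, hw⟩
    exact (h x hx b hb).trans (hw.2 ⟨b, hb, rfl⟩)⟩

theorem isGreatest_setOf_isLeast (h : IsSaddlePointOn X Y f a b) (ha : a ∈ X) (hb : b ∈ Y) :
    IsGreatest {w | ∃ y ∈ Y, IsLeast ((f · y) '' X) w} (f a b) :=
  ⟨⟨b, hb, h.isLeast_image ha hb⟩, by
    rintro w ⟨y, hy, hw⟩
    exact (hw.2 ⟨a, ha, rfl⟩).trans (h a ha y hy)⟩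

end Preorder

section ConditionallyCompleteLattice

variable [ConditionallyCompleteLattice β]

theorem csInf_image_csSup_eq (h : IsSaddlePointOn X Y f a b) (ha : a ∈ X) (hb : b ∈ Y)
    (hbdd : ∀ x ∈ X, BddAbove (f x '' Y)) :
    sInf ((fun x => sSup (f x '' Y)) '' X) = f a b :=
  IsLeast.csInf_eq ⟨⟨a, ha, (h.isGreatest_image ha hb).csSup_eq⟩, by
    rintro _ ⟨x, hx, rfl⟩
    exact (h x hx b hb).trans (le_csSup (hbdd x hx) ⟨b, hb, rfl⟩)⟩

theorem csSup_image_csInf_eq (h : IsSaddlePointOn X Y f a b) (ha : a ∈ X) (hb : b ∈ Y)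
    (hbdd : ∀ y ∈ Y, BddBelow ((f · y) '' X)) :
    sSup ((fun y => sInf ((f · y) '' X)) '' Y) = f a b :=
  IsGreatest.csSup_eq ⟨⟨b, hb, (h.isLeast_image ha hb).csInf_eq⟩, by
    rintro _ ⟨y, hy, rfl⟩
    exact (csInf_le (hbdd y hy) ⟨a, ha, rfl⟩).trans (h a ha y hy)⟩

end ConditionallyCompleteLattice

end IsSaddlePointOn

theorem LinearMap.exists_isSaddlePointOn {E F : Type*}
    [TopologicalSpace E] [AddCommGroup E] [Module ℝ E] [IsTopologicalAddGroup E]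
    [ContinuousSMul ℝ E] [TopologicalSpace F] [AddCommGroup F] [Module ℝ F]
    [IsTopologicalAddGroup F] [ContinuousSMul ℝ F] (B : E →ₗ[ℝ] F →ₗ[ℝ] ℝ)
    (hB : ∀ x, Continuous (B x)) (hB' : ∀ y, Continuous (B.flip y))
    {X : Set E} {Y : Set F} (hX : X.Nonempty) (cX : Convex ℝ X) (kX : IsCompact X)
    (hY : Y.Nonempty) (cY : Convex ℝ Y) (kY : IsCompact Y) :
    ∃ a ∈ X, ∃ b ∈ Y, IsSaddlePointOn X Y (fun x y => B x y) a b :=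
  Sion.exists_isSaddlePointOn hX cX kX
    (fun y _ => (hB' y).continuousOn.lowerSemicontinuousOn)
    (fun y _ => ((B.flip y).convexOn cX).quasiconvexOn) cY hY kY
    (fun x _ => (hB x).continuousOn.upperSemicontinuousOn)
    (fun x _ => ((B x).concaveOn cY).quasiconcaveOn)

theorem matPayoff_eq_toLinearMap₂' {l m : ℕ} (Z : Matrix (Fin l) (Fin m) ℝ)
    (x : Fin l → ℝ) (y : Fin m → ℝ) : matPayoff Z x y = Matrix.toLinearMap₂' ℝ Z x y := by
  simp only [matPayoff, Matrix.toLinearMap₂'_apply, smul_eq_mul]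
  exact sum_congr rfl fun i _ => sum_congr rfl fun j _ => by ring

/-- Every matrix game is determined: `sup_x inf_y xᵀZy = inf_y sup_x xᵀZy`, and moreover
all four extrema are attained, so `max_x min_y xᵀZy = min_y max_x xᵀZy`. -/
theorem matrix_game_determined (l m : ℕ) (hl : 1 ≤ l) (hm : 1 ≤ m)
    (Z : Matrix (Fin l) (Fin m) ℝ) :
    sSup ((fun x => sInf ((fun y => matPayoff Z x y) '' stdSimplex ℝ (Fin m))) ''
        stdSimplex ℝ (Fin l)) =
      sInf ((fun y => sSup ((fun x => matPayoff Z x y) '' stdSimplex ℝ (Fin l))) ''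
        stdSimplex ℝ (Fin m)) ∧
    ∃ v : ℝ,
      IsGreatest {w : ℝ | ∃ x ∈ stdSimplex ℝ (Fin l),
        IsLeast {u : ℝ | ∃ y ∈ stdSimplex ℝ (Fin m), u = matPayoff Z x y} w} v ∧
      IsLeast {w : ℝ | ∃ y ∈ stdSimplex ℝ (Fin m),
        IsGreatest {u : ℝ | ∃ x ∈ stdSimplex ℝ (Fin l), u = matPayoff Z x y} w} v := by
  have : NeZero l := ⟨by omega⟩
  have : NeZero m := ⟨by omega⟩
  have hΔ (n : ℕ) [NeZero n] : (stdSimplex ℝ (Fin n)).Nonempty :=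
    ⟨_, single_mem_stdSimplex ℝ 0⟩
  -- In `IsSaddlePointOn X Y f a b` the first variable minimizes, so player 2 comes first.
  set B : (Fin m → ℝ) →ₗ[ℝ] (Fin l → ℝ) →ₗ[ℝ] ℝ := (Matrix.toLinearMap₂' ℝ Z).flip
  obtain ⟨y₀, hy₀, x₀, hx₀, h⟩ := B.exists_isSaddlePointOn
    (fun y => (B y).continuous_of_finiteDimensional)
    (fun x => (B.flip x).continuous_of_finiteDimensional)
    (hΔ m) (convex_stdSimplex ℝ _) (isCompact_stdSimplex ℝ _)
    (hΔ l) (convex_stdSimplex ℝ _) (isCompact_stdSimplex ℝ _)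
  simp only [B, LinearMap.flip_apply, ← matPayoff_eq_toLinearMap₂'] at h
  have hset {δ : Type} (g : δ → ℝ) (s : Set δ) : {u | ∃ c ∈ s, u = g c} = g '' s :=
    Set.ext fun u => exists_congr fun c => and_congr_right fun _ => eq_comm
  simp only [hset]
  refine ⟨(h.csSup_image_csInf_eq hy₀ hx₀ fun x _ => ?_).trans
    (h.csInf_image_csSup_eq hy₀ hx₀ fun y _ => ?_).symm,
    _, h.isGreatest_setOf_isLeast hy₀ hx₀, h.isLeast_setOf_isGreatest hy₀ hx₀⟩
  · exact ((isCompact_stdSimplex ℝ _).image (by unfold matPayoff; fun_prop)).bddBelow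
  · exact ((isCompact_stdSimplex ℝ _).image (by unfold matPayoff; fun_prop)).bddAbove
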